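/- Let A be a Banach algebra with a bounded left approximate identity, and D : A → A* a surjective bounded derivation such that D'' : A** → A*** is a derivation. Then A is reflexive. -/

import Mathlib

open ContinuousLinearMap NormedSpace Filter Topology Metric

noncomputable section

/-- The topological dual of a normed space `E` (the older Mathlib's `NormedSpace.Dual`,
since removed from Mathlib in favour of `StrongDual`). -/
def NormedSpace.Dual (𝕜 : Type*) [NontriviallyNormedField 𝕜] (E : Type*)
    [NormedAddCommGroup E] [NormedSpace 𝕜 E] : Type _ :=
  E →L[𝕜] 𝕜

instance NormedSpace.Dual.instNormedAddCommGroup (𝕜 : Type*) [NontriviallyNormedField 𝕜]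
    (E : Type*) [NormedAddCommGroup E] [NormedSpace 𝕜 E] :
    NormedAddCommGroup (NormedSpace.Dual 𝕜 E) :=
  ContinuousLinearMap.toNormedAddCommGroup

instance NormedSpace.Dual.instNormedSpace (𝕜 : Type*) [NontriviallyNormedField 𝕜]
    (E : Type*) [NormedAddCommGroup E] [NormedSpace 𝕜 E] :
    NormedSpace 𝕜 (NormedSpace.Dual 𝕜 E) :=
  ContinuousLinearMap.toNormedSpace

instance NormedSpace.Dual.instFunLike (𝕜 : Type*) [NontriviallyNormedField 𝕜]
    (E : Type*) [NormedAddCommGroup E] [NormedSpace 𝕜 E] :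
    FunLike (NormedSpace.Dual 𝕜 E) E 𝕜 :=
  ContinuousLinearMap.funLike

instance NormedSpace.Dual.instContinuousLinearMapClass (𝕜 : Type*) [NontriviallyNormedField 𝕜]
    (E : Type*) [NormedAddCommGroup E] [NormedSpace 𝕜 E] :
    ContinuousLinearMapClass (NormedSpace.Dual 𝕜 E) 𝕜 E 𝕜 :=
  ContinuousLinearMap.continuousSemilinearMapClass

instance NormedSpace.Dual.instInhabited (𝕜 : Type*) [NontriviallyNormedField 𝕜]
    (E : Type*) [NormedAddCommGroup E] [NormedSpace 𝕜 E] :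
    Inhabited (NormedSpace.Dual 𝕜 E) :=
  ⟨0⟩

namespace Arens

section Bilinear

variable {X Y Z : Type*} [NormedAddCommGroup X] [NormedSpace ℂ X]
  [NormedAddCommGroup Y] [NormedSpace ℂ Y] [NormedAddCommGroup Z] [NormedSpace ℂ Z]

/-- The Arens adjoint `m*` of a bounded bilinear map `m : X × Y → Z`,
`⟨m*(z',x), y⟩ = ⟨z', m(x,y)⟩`. -/
def adj (f : X →L[ℂ] Y →L[ℂ] Z) : Dual ℂ Z →L[ℂ] X →L[ℂ] Dual ℂ Y :=
  ((ContinuousLinearMap.compL ℂ X (Y →L[ℂ] Z) (Y →L[ℂ] ℂ)).flip f).comp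
    (ContinuousLinearMap.compL ℂ Y Z ℂ)

@[simp] lemma adj_apply (f : X →L[ℂ] Y →L[ℂ] Z) (z' : Dual ℂ Z) (x : X) (y : Y) :
    adj f z' x y = z' (f x y) := rfl

/-- The Arens triple-adjoint extension `m*** : X** × Y** → Z**` of a bounded
bilinear map `m : X × Y → Z`. -/
def ext3 (f : X →L[ℂ] Y →L[ℂ] Z) :
    Dual ℂ (Dual ℂ X) →L[ℂ] Dual ℂ (Dual ℂ Y) →L[ℂ] Dual ℂ (Dual ℂ Z) :=
  adj (adj (adj f))

/-- Weak-star convergence of a net `(a i)` of `X` (canonically embedded in `X**`)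
to an element `F` of the bidual `X**`. -/
def WStarTendsto {ι : Type*} (a : ι → X) (l : Filter ι) (F : Dual ℂ (Dual ℂ X)) : Prop :=
  ∀ x' : Dual ℂ X, Tendsto (fun i => x' (a i)) l (𝓝 (F x'))

end Bilinear

section Algebra

variable (A : Type*) [NonUnitalNormedRing A] [NormedSpace ℂ A]
  [IsScalarTower ℂ A A] [SMulCommClass ℂ A A]

/-- The multiplication of a (non-unital) Banach algebra as a bounded bilinear map. -/
abbrev mulCLM : A →L[ℂ] A →L[ℂ] A := ContinuousLinearMap.mul ℂ A

/-- The first Arens product on the bidual `A**`. -/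
def fstArens (F G : Dual ℂ (Dual ℂ A)) : Dual ℂ (Dual ℂ A) := ext3 (mulCLM A) F G

/-- The second Arens product on the bidual `A**` (`m^{t***t}`). -/
def sndArens (F G : Dual ℂ (Dual ℂ A)) : Dual ℂ (Dual ℂ A) :=
  ext3 ((mulCLM A).flip) G F

/-- A Banach algebra is Arens regular when its two Arens products coincide. -/
def ArensRegular : Prop := ∀ F G : Dual ℂ (Dual ℂ A), fstArens A F G = sndArens A F G

end Algebra

section ModuleWC

universe u
variable {A : Type u} {B : Type*} [NonUnitalNormedRing A] [NormedSpace ℂ A]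
  [NormedAddCommGroup B] [NormedSpace ℂ B]

/-- For a left Banach `A`-module action `πl` on `B`, the element `b' a ∈ B*`,
`⟨b' a, b⟩ = ⟨b', a • b⟩`. -/
def dualSmulL (πl : A →L[ℂ] B →L[ℂ] B) (b' : Dual ℂ B) (a : A) : Dual ℂ B := adj πl b' a

/-- The Arens extension `b' a'' ∈ B***`, `⟨b'', b' a''⟩ = ⟨π_ℓ***(a'', b''), b'⟩`. -/
def dualSmulLStar (πl : A →L[ℂ] B →L[ℂ] B) (b' : Dual ℂ B) (F : Dual ℂ (Dual ℂ A)) :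
    Dual ℂ (Dual ℂ (Dual ℂ B)) :=
  (inclusionInDoubleDual ℂ (Dual ℂ B) b').comp (ext3 πl F)

/-- `b' ∈ B*` has the left-weak*-weak convergence property (`Lw*wc`) with respect to `A`:
for every net `(a_α) ⊆ A` with `a_α → a''` weak* in `A**`, the net `b' a_α` converges
weakly to `b' a''` in `B*`. -/
def LWStarWC (πl : A →L[ℂ] B →L[ℂ] B) (b' : Dual ℂ B) : Prop :=
  ∀ (ι : Type u) (l : Filter ι) (a : ι → A) (F : Dual ℂ (Dual ℂ A)),
    WStarTendsto a l F →
    ∀ b'' : Dual ℂ (Dual ℂ B),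
      Tendsto (fun i => b'' (dualSmulL πl b' (a i))) l (𝓝 (dualSmulLStar πl b' F b''))

/-- For a right Banach `A`-module action `πr` on `B`, the element `a b' ∈ B*`,
`⟨a b', b⟩ = ⟨b', b • a⟩`. -/
def dualSmulR (πr : B →L[ℂ] A →L[ℂ] B) (a : A) (b' : Dual ℂ B) : Dual ℂ B :=
  adj πr.flip b' a

/-- The Arens extension `a'' b' ∈ B***`, `⟨b'', a'' b'⟩ = ⟨π_r^{t***}(a'', b''), b'⟩`. -/
def dualSmulRStar (πr : B →L[ℂ] A →L[ℂ] B) (F : Dual ℂ (Dual ℂ A)) (b' : Dual ℂ B) :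
    Dual ℂ (Dual ℂ (Dual ℂ B)) :=
  (inclusionInDoubleDual ℂ (Dual ℂ B) b').comp (ext3 πr.flip F)

/-- `b' ∈ B*` has the right-weak*-weak convergence property (`Rw*wc`) with respect to `A`. -/
def RWStarWC (πr : B →L[ℂ] A →L[ℂ] B) (b' : Dual ℂ B) : Prop :=
  ∀ (ι : Type u) (l : Filter ι) (a : ι → A) (F : Dual ℂ (Dual ℂ A)),
    WStarTendsto a l F →
    ∀ b'' : Dual ℂ (Dual ℂ B),
      Tendsto (fun i => b'' (dualSmulR πr (a i) b')) l (𝓝 (dualSmulRStar πr F b' b''))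

end ModuleWC

section AlgebraWC

variable (A : Type u) [NonUnitalNormedRing A] [NormedSpace ℂ A]
  [IsScalarTower ℂ A A] [SMulCommClass ℂ A A]

/-- The product `a'' a' ∈ A*` (first step of the first Arens product):
`⟨a'' a', a⟩ = ⟨a'', a' a⟩` where `⟨a' a, b⟩ = ⟨a', a b⟩`. -/
def biSmul (F : Dual ℂ (Dual ℂ A)) (a' : Dual ℂ A) : Dual ℂ A :=
  F.comp (adj (mulCLM A) a')

/-- The element `a · a' ∈ A*`, `⟨a a', b⟩ = ⟨a', b a⟩`. -/
def leftMulDual (a : A) (a' : Dual ℂ A) : Dual ℂ A := a'.comp ((mulCLM A).flip a)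

/-- `A*` has the `Rw*wc`-property with respect to `A`: for every `a' ∈ A*` and every net
`(a_α) ⊆ A` with `a_α → a''` weak* in `A**`, the net `a_α a'` (`⟨a_α a', b⟩ = ⟨a', b a_α⟩`)
converges weakly in `A*` to `a'' a'`. -/
def RWStarWCDualProp : Prop :=
  ∀ (a' : Dual ℂ A) (ι : Type u) (l : Filter ι) (a : ι → A) (F : Dual ℂ (Dual ℂ A)),
    WStarTendsto a l F →
    ∀ x'' : Dual ℂ (Dual ℂ A),
      Tendsto (fun i => x'' (leftMulDual A (a i) a')) l (𝓝 (x'' (biSmul A F a')))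

/-- `A*` has the `Lw*wc`-property with respect to `A`. -/
def LWStarWCDualProp : Prop := ∀ a' : Dual ℂ A, LWStarWC (mulCLM A) a'

/-- `A**` has the `Lw*wc`-property with respect to `A`: for every `x'' ∈ A**` and every net
`(a_α) ⊆ A` with `a_α → a''` weak* in `A**`, the net `x'' a_α` converges weakly in `A**`
to `x'' a''`. -/
def LWStarWCBidualProp : Prop :=
  ∀ (x'' : Dual ℂ (Dual ℂ A)) (ι : Type u) (l : Filter ι) (a : ι → A) (F : Dual ℂ (Dual ℂ A)),
    WStarTendsto a l F →
    ∀ Φ : Dual ℂ (Dual ℂ (Dual ℂ A)),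
      Tendsto (fun i => Φ (fstArens A x'' (inclusionInDoubleDual ℂ A (a i)))) l
        (𝓝 (Φ (fstArens A x'' F)))

/-- `D : A → A*` is a derivation: `D(ab) = a·D(b) + D(a)·b`, where
`(a·f)(x) = f(x a)` and `(f·b)(x) = f(b x)`. -/
def IsDerivation (D : A →L[ℂ] Dual ℂ A) : Prop :=
  ∀ a b : A, D (a * b) = (D b).comp ((mulCLM A).flip a) + (D a).comp (mulCLM A b)

/-- `A` is weakly amenable: every bounded derivation `D : A → A*` is inner. -/
def WeaklyAmenable : Prop :=
  ∀ D : A →L[ℂ] Dual ℂ A, IsDerivation A D →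
    ∃ f : Dual ℂ A, ∀ a : A, D a = f.comp ((mulCLM A).flip a) - f.comp (mulCLM A a)

/-- The left action of `A**` (with the first Arens product) on `A***`:
`(F·Φ)(G) = Φ(G F)`. -/
def ddLeftAct (F : Dual ℂ (Dual ℂ A)) (Φ : Dual ℂ (Dual ℂ (Dual ℂ A))) :
    Dual ℂ (Dual ℂ (Dual ℂ A)) :=
  Φ.comp ((ext3 (mulCLM A)).flip F)

/-- The right action of `A**` (with the first Arens product) on `A***`:
`(Φ·F)(G) = Φ(F G)`. -/
def ddRightAct (F : Dual ℂ (Dual ℂ A)) (Φ : Dual ℂ (Dual ℂ (Dual ℂ A))) :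
    Dual ℂ (Dual ℂ (Dual ℂ A)) :=
  Φ.comp (ext3 (mulCLM A) F)

/-- A bounded map `D : A** → A***` is a derivation for the first Arens product. -/
def IsDerivationDD (D : Dual ℂ (Dual ℂ A) →L[ℂ] Dual ℂ (Dual ℂ (Dual ℂ A))) : Prop :=
  ∀ F G : Dual ℂ (Dual ℂ A),
    D (fstArens A F G) = ddLeftAct A F (D G) + ddRightAct A G (D F)

/-- `A**` (with the first Arens product) is weakly amenable. -/
def WeaklyAmenableDD : Prop :=
  ∀ D : Dual ℂ (Dual ℂ A) →L[ℂ] Dual ℂ (Dual ℂ (Dual ℂ A)), IsDerivationDD A D →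
    ∃ Φ : Dual ℂ (Dual ℂ (Dual ℂ A)), ∀ F, D F = ddLeftAct A F Φ - ddRightAct A F Φ

/-- `A*** A** ⊆ A*`: each product `x''' x''` (`⟨x''' x'', a''⟩ = ⟨x''', x'' a''⟩`)
lies in the canonical image of `A*` in `A***`. -/
def TripleDualMulIntoDual : Prop :=
  ∀ (Φ : Dual ℂ (Dual ℂ (Dual ℂ A))) (F : Dual ℂ (Dual ℂ A)),
    ∃ a' : Dual ℂ A, ddRightAct A F Φ = inclusionInDoubleDual ℂ (Dual ℂ A) a'

end AlgebraWC

section DualMap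

variable {X Y : Type*} [NormedAddCommGroup X] [NormedSpace ℂ X]
  [NormedAddCommGroup Y] [NormedSpace ℂ Y]

/-- The Banach-space adjoint of a bounded operator. -/
def dualMap' (T : X →L[ℂ] Y) : Dual ℂ Y →L[ℂ] Dual ℂ X :=
  (ContinuousLinearMap.compL ℂ X Y ℂ).flip T

/-- The second adjoint `D'' : A** → A***` of `D : A → A*`. -/
def secondAdjoint {A : Type*} [NonUnitalNormedRing A] [NormedSpace ℂ A]
    (D : A →L[ℂ] Dual ℂ A) :
    Dual ℂ (Dual ℂ A) →L[ℂ] Dual ℂ (Dual ℂ (Dual ℂ A)) :=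
  dualMap' (dualMap' D)

end DualMap

section Biregular

variable (A B : Type*) [NonUnitalNormedRing A] [NormedSpace ℂ A]
  [NonUnitalNormedRing B] [NormedSpace ℂ B]

/-- A bounded bilinear form `m : A × B → ℂ` is biregular (Ülger): for any sequences
`(a_i), (aa2_j)` in the unit ball of `A` and `(b_i), (bb_j)` in the unit ball of `B`,
the two iterated limits of `m(a_i aa2_j, b_i bb_j)` coincide whenever both exist. -/
def Biregular (m : A →L[ℂ] B →L[ℂ] ℂ) : Prop :=
  ∀ (a aa2 : ℕ → A) (b bb : ℕ → B),
    (∀ i, ‖a i‖ ≤ 1) → (∀ j, ‖aa2 j‖ ≤ 1) → (∀ i, ‖b i‖ ≤ 1) → (∀ j, ‖bb j‖ ≤ 1) →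
    ∀ (g h : ℕ → ℂ) (L L' : ℂ),
      (∀ i, Tendsto (fun j => m (a i * aa2 j) (b i * bb j)) atTop (𝓝 (g i))) →
      Tendsto g atTop (𝓝 L) →
      (∀ j, Tendsto (fun i => m (a i * aa2 j) (b i * bb j)) atTop (𝓝 (h j))) →
      Tendsto h atTop (𝓝 L') → L = L'

/-- Arens regularity of the projective tensor product `A ⊗̂ B`.  By Ülger's theorem
(`[22, Theorem 3.4]`), `A ⊗̂ B` is Arens regular if and only if every bounded bilinear
form `m : A × B → ℂ` is biregular; since the dual of `A ⊗̂ B` is exactly the space of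
bounded bilinear forms on `A × B`, we take this equivalent characterization as the
formalization of Arens regularity of `A ⊗̂ B`. -/
def ProjArensRegular : Prop := ∀ m : A →L[ℂ] B →L[ℂ] ℂ, Biregular A B m

end Biregular

end Arens

/-!
A weak* cluster point `E ∈ A**` of the bounded approximate identity (Banach–Alaoglu) is a left
unit for the first Arens product `□` on the canonical image of `A`. Since `D` is onto, so is
`D''`, and for `Φ = D'' H` the derivation identity for `D''` gives
`Φ (F □ G) = G (H·D'F - D'(H □ F))`: the functional `G ↦ Φ (F □ G)` lies in `A*`.
Testing this on `Φ ∈ A*` shows that `E` is a left unit on all of `A**`; then every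
`Φ = Φ (E □ ·)` lies in `A*`, so `A*` is reflexive, and hence so is the Banach space `A`.
-/

lemma NormedSpace.Dual.ext {E : Type*} [NormedAddCommGroup E] [NormedSpace ℂ E]
    {f g : Dual ℂ E} (h : ∀ x, f x = g x) : f = g :=
  ContinuousLinearMap.ext h

instance NormedSpace.Dual.instCompleteSpace {E : Type*} [NormedAddCommGroup E]
    [NormedSpace ℂ E] : CompleteSpace (Dual ℂ E) :=
  inferInstanceAs (CompleteSpace (E →L[ℂ] ℂ))

lemma Submodule.mem_of_forall_dual_eq_zero {𝕜 V : Type*} [RCLike 𝕜] [NormedAddCommGroup V]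
    [NormedSpace 𝕜 V] {p : Submodule 𝕜 V} (hp : IsClosed (p : Set V)) {x : V}
    (h : ∀ f : StrongDual 𝕜 V, (∀ y ∈ p, f y = 0) → f x = 0) : x ∈ p := by
  have : IsClosed (p : Set V) := hp
  by_contra hx
  have hx' : p.mkQ x ≠ 0 := by rwa [Submodule.mkQ_apply, ne_eq, Submodule.Quotient.mk_eq_zero]
  obtain ⟨g, hg⟩ := SeparatingDual.exists_ne_zero (R := 𝕜) hx'
  refine hg (h (g.comp p.mkQL) fun y hy => ?_)
  rw [ContinuousLinearMap.comp_apply, Submodule.mkQL_apply, Submodule.mkQ_apply,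
    (Submodule.Quotient.mk_eq_zero p).2 hy, map_zero]

namespace Arens

section Banach

variable {X Y : Type*} [NormedAddCommGroup X] [NormedSpace ℂ X]
  [NormedAddCommGroup Y] [NormedSpace ℂ Y]

lemma exists_wStarTendsto_of_norm_le {ι : Type*} (U : Ultrafilter ι) (e : ι → X) {C : ℝ}
    (he : ∀ i, ‖e i‖ ≤ C) : ∃ E : Dual ℂ (Dual ℂ X), WStarTendsto e U E := by
  let x : ι → WeakDual ℂ (Dual ℂ X) :=
    fun i => StrongDual.toWeakDual (inclusionInDoubleDual ℂ X (e i))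
  have hx : ↑(U.map x) ≤
      𝓟 (WeakDual.toStrongDual (𝕜 := ℂ) (E := Dual ℂ X) ⁻¹' closedBall 0 C) := by
    refine le_principal_iff.2 (Ultrafilter.mem_map.2 (Filter.univ_mem' fun i => ?_))
    simp only [Set.mem_preimage, mem_closedBall, dist_zero_right]
    exact (double_dual_bound ℂ X (e i)).trans (he i)
  obtain ⟨E, -, hE⟩ := (WeakDual.isCompact_closedBall 0 C).ultrafilter_le_nhds _ hx
  exact ⟨WeakDual.toStrongDual E, fun f => ((WeakDual.eval_continuous f).tendsto E).comp hE⟩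

lemma exists_norm_le_mul_norm_dualMap' [CompleteSpace X] [CompleteSpace Y] {T : X →L[ℂ] Y}
    (hT : Function.Surjective T) :
    ∃ K : NNReal, ∀ g : Dual ℂ Y, ‖g‖ ≤ K * ‖dualMap' T g‖ := by
  obtain ⟨c, hc0, hc⟩ := T.exists_preimage_norm_le hT
  refine ⟨⟨c, hc0.le⟩, fun g => g.opNorm_le_bound (by positivity) fun y => ?_⟩
  obtain ⟨x, rfl, hx⟩ := hc y
  calc ‖g (T x)‖ = ‖dualMap' T g x‖ := rfl
    _ ≤ ‖dualMap' T g‖ * (c * ‖T x‖) := (dualMap' T g).le_of_opNorm_le_of_le le_rfl hx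
    _ = c * ‖dualMap' T g‖ * ‖T x‖ := by ring

lemma surjective_dualMap'_dualMap' [CompleteSpace X] [CompleteSpace Y] {T : X →L[ℂ] Y}
    (hT : Function.Surjective T) : Function.Surjective (dualMap' (dualMap' T)) := by
  intro ψ
  obtain ⟨K, hK⟩ := exists_norm_le_mul_norm_dualMap' hT
  have hanti : AntilipschitzWith K (dualMap' T) := (dualMap' T).antilipschitz_of_bound hK
  let e := (dualMap' T).equivRange hanti.injective
    (hanti.isClosed_range (dualMap' T).uniformContinuous)
  obtain ⟨φ, hφ, -⟩ := exists_extension_norm_eq _ (ψ.comp e.symm.toContinuousLinearMap)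
  refine ⟨φ, Dual.ext fun g => ?_⟩
  exact (hφ ⟨_, g, rfl⟩).trans (congrArg ψ ((dualMap' T).equivRange_symm_apply _ _ g))

lemma surjective_inclusionInDoubleDual_of_dual [CompleteSpace X]
    (h : Function.Surjective (inclusionInDoubleDual ℂ (Dual ℂ X))) :
    Function.Surjective (inclusionInDoubleDual ℂ X) := by
  intro F
  let J : X →ₗ[ℂ] Dual ℂ (Dual ℂ X) := (inclusionInDoubleDual ℂ X).toLinearMap
  have hJ : IsClosed (Set.range J) :=
    (inclusionInDoubleDualLi ℂ (E := X)).isometry.isUniformInducing.isComplete_range.isClosed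
  refine Submodule.mem_of_forall_dual_eq_zero (p := LinearMap.range J) hJ fun f hf => ?_
  obtain ⟨s, rfl⟩ := h f
  have hs : s = 0 := Dual.ext fun x => hf _ ⟨x, rfl⟩
  rw [hs, map_zero]
  rfl

end Banach

section Algebra

variable {A : Type*} [NonUnitalNormedRing A] [NormedSpace ℂ A]
  [IsScalarTower ℂ A A] [SMulCommClass ℂ A A]

lemma fstArens_inclusionInDoubleDual_of_wStarTendsto {ι : Type*} {l : Filter ι} [l.NeBot]
    {e : ι → A} {E : Dual ℂ (Dual ℂ A)} (hE : WStarTendsto e l E)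
    (he : ∀ a, Tendsto (fun i => e i * a) l (𝓝 a)) (a : A) :
    fstArens A E (inclusionInDoubleDual ℂ A a) = inclusionInDoubleDual ℂ A a :=
  Dual.ext fun f => tendsto_nhds_unique
    (hE (biSmul A (inclusionInDoubleDual ℂ A a) f) : Tendsto (fun i => f (e i * a)) l _)
    ((f.continuous.tendsto a).comp (he a))

lemma secondAdjoint_apply_fstArens {D : A →L[ℂ] Dual ℂ A}
    (hD : IsDerivationDD A (secondAdjoint D)) (H F G : Dual ℂ (Dual ℂ A)) :
    secondAdjoint D H (fstArens A F G)
      = G (biSmul A H (dualMap' D F) - dualMap' D (fstArens A H F)) := by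
  have h : G (biSmul A H (dualMap' D F))
      = secondAdjoint D H (fstArens A F G) + G (dualMap' D (fstArens A H F)) :=
    congrArg (· F) (hD G H)
  rw [map_sub, h, add_sub_cancel_right]

lemma tripleDualMulIntoDual_of_isDerivationDD {D : A →L[ℂ] Dual ℂ A}
    (hsurj : Function.Surjective (secondAdjoint D)) (hD : IsDerivationDD A (secondAdjoint D)) :
    TripleDualMulIntoDual A := by
  intro Φ F
  obtain ⟨H, rfl⟩ := hsurj Φ
  exact ⟨_, Dual.ext fun G => secondAdjoint_apply_fstArens hD H F G⟩

lemma fstArens_eq_self_of_tripleDualMulIntoDual (hA : TripleDualMulIntoDual A)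
    {E : Dual ℂ (Dual ℂ A)}
    (hE : ∀ a, fstArens A E (inclusionInDoubleDual ℂ A a) = inclusionInDoubleDual ℂ A a)
    (G : Dual ℂ (Dual ℂ A)) : fstArens A E G = G := by
  refine Dual.ext fun f => ?_
  obtain ⟨s, hs⟩ := hA (inclusionInDoubleDual ℂ (Dual ℂ A) f) E
  have hsG : ∀ G, fstArens A E G f = G s := fun G => congrArg (· G) hs
  have hsf : s = f := Dual.ext fun a =>
    calc s a = fstArens A E (inclusionInDoubleDual ℂ A a) f :=
        (hsG (inclusionInDoubleDual ℂ A a)).symm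
      _ = f a := by rw [hE]; rfl
  rw [hsG, hsf]

lemma surjective_inclusionInDoubleDual_dual_of_tripleDualMulIntoDual
    (hA : TripleDualMulIntoDual A) {E : Dual ℂ (Dual ℂ A)} (hE : ∀ G, fstArens A E G = G) :
    Function.Surjective (inclusionInDoubleDual ℂ (Dual ℂ A)) := fun Φ => by
  obtain ⟨s, hs⟩ := hA Φ E
  exact ⟨s, hs.symm.trans (Dual.ext fun G => congrArg Φ (hE G))⟩

end Algebra

end Arens

theorem reflexive_of_surjective_derivation_of_bai_general
    {A : Type*} [NonUnitalNormedRing A] [NormedSpace ℂ A]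
    [IsScalarTower ℂ A A] [SMulCommClass ℂ A A] [CompleteSpace A]
    -- a bounded left approximate identity:
    {ι : Type*} (l : Filter ι) [l.NeBot] (e : ι → A) (C : ℝ)
    (hbdd : ∀ i, ‖e i‖ ≤ C)
    (hbai : ∀ a : A, Tendsto (fun i => e i * a) l (𝓝 a))
    (D : A →L[ℂ] Dual ℂ A)
    (hsurj : Function.Surjective D)
    (hD'' : Arens.IsDerivationDD A (Arens.secondAdjoint D)) :
    Function.Surjective (NormedSpace.inclusionInDoubleDual ℂ A) := by
  obtain ⟨E, hE⟩ := Arens.exists_wStarTendsto_of_norm_le (Ultrafilter.of l) e hbdd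
  have hunit := Arens.fstArens_inclusionInDoubleDual_of_wStarTendsto hE
      fun a => (hbai a).mono_left (Ultrafilter.of_le l)
  have hA := Arens.tripleDualMulIntoDual_of_isDerivationDD
    (Arens.surjective_dualMap'_dualMap' hsurj) hD''
  exact Arens.surjective_inclusionInDoubleDual_of_dual
    (Arens.surjective_inclusionInDoubleDual_dual_of_tripleDualMulIntoDual hA
      (Arens.fstArens_eq_self_of_tripleDualMulIntoDual hA hunit))

/-- **Theorem 3-5 (4).** If `A` has a bounded left approximate identity and `D : A → A*`
is a surjective bounded derivation whose second adjoint `D''` is a derivation, then `A`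
is reflexive. -/
theorem reflexive_of_surjective_derivation_of_bai
    {A : Type*} [NonUnitalNormedRing A] [NormedSpace ℂ A]
    [IsScalarTower ℂ A A] [SMulCommClass ℂ A A] [CompleteSpace A]
    -- a bounded left approximate identity:
    {ι : Type*} (l : Filter ι) [l.NeBot] (e : ι → A) (C : ℝ)
    (hbdd : ∀ i, ‖e i‖ ≤ C)
    (hbai : ∀ a : A, Tendsto (fun i => e i * a) l (𝓝 a))
    (D : A →L[ℂ] Dual ℂ A) (hD : Arens.IsDerivation A D)
    (hsurj : Function.Surjective D)
    (hD'' : Arens.IsDerivationDD A (Arens.secondAdjoint D)) :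
    Function.Surjective (NormedSpace.inclusionInDoubleDual ℂ A) :=
  reflexive_of_surjective_derivation_of_bai_general l e C hbdd hbai D hsurj hD''
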